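/- arXiv:2604.23971 — 5 statements merged into one kernel-verified Lean document; each statement's English description precedes it below -/
import Mathlib

section
/- Let T be a closed interval [a,b] in ℝ and let {f_j}_{j∈J} be a finite family of C¹ functions on [a,b]. Define g(x) = max_{j∈J} f_j(x). Then for every interior point x ∈ (a,b), the right derivative g'₊(x) and left derivative g'₋(x) exist and satisfy g'₊(x) ≥ g'₋(x). Moreover, letting J(x) = {j : f_j(x) = g(x)}, we have g'₊(x) ≥ max_{j∈J(x)} f_j'(x) and g'₋(x) ≤ min_{j∈J(x)} f_j'(x). -/
/-!
Near an interior point `x` only the functions attaining the maximum at `x` matter, and they all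
take the same value `c` there. Each of them is `c + (y - x) f_j'(x) + o(y - x)`, and the maximum
of these tangent lines is `c + (y - x) max_j f_j'(x)` to the right of `x` and
`c + (y - x) min_j f_j'(x)` to the left, which gives the one-sided derivatives.
-/

open Set Filter Asymptotics Topology

lemma abs_ciSup_sub_ciSup_le {ι : Type*} [Fintype ι] [Nonempty ι] (u v : ι → ℝ) :
    |(⨆ i, u i) - ⨆ i, v i| ≤ ∑ i, |u i - v i| := by
  have key : ∀ u v : ι → ℝ, (⨆ i, u i) - (⨆ i, v i) ≤ ∑ i, |u i - v i| := by
    intro u v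
    rw [sub_le_iff_le_add]
    refine ciSup_le fun i => ?_
    have hv : v i ≤ ⨆ j, v j := le_ciSup (Finite.bddAbove_range v) i
    have hsum : |u i - v i| ≤ ∑ j, |u j - v j| :=
      Finset.single_le_sum (f := fun j => |u j - v j|) (fun j _ => abs_nonneg _)
        (Finset.mem_univ i)
    linarith [le_abs_self (u i - v i)]
  refine abs_sub_le_iff.2 ⟨key u v, ?_⟩
  simpa only [abs_sub_comm] using key v u

lemma hasDerivWithinAt_ciSup_of_tangents {ι : Type*} [Fintype ι] [Nonempty ι]
    {f : ι → ℝ → ℝ} {d : ι → ℝ} {s : Set ℝ} {x c D : ℝ}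
    (hfx : ∀ i, f i x = c) (hd : ∀ i, HasDerivWithinAt (f i) (d i) s x)
    (hD : ∀ y ∈ s, ⨆ i, (c + (y - x) * d i) = c + (y - x) * D) :
    HasDerivWithinAt (fun y => ⨆ i, f i y) D s x := by
  rw [hasDerivWithinAt_iff_isLittleO]
  have hsum : (fun y => ∑ i, |f i y - f i x - (y - x) • d i|) =o[𝓝[s] x] (· - x) :=
    IsLittleO.fun_sum fun i _ => by
      simpa only [Real.norm_eq_abs] using (hasDerivWithinAt_iff_isLittleO.1 (hd i)).norm_left
  refine (IsBigO.of_bound' ?_).trans_isLittleO hsum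
  filter_upwards [self_mem_nhdsWithin] with y hy
  rw [Real.norm_of_nonneg (Finset.sum_nonneg fun i _ => abs_nonneg _), Real.norm_eq_abs]
  calc |(⨆ i, f i y) - (⨆ i, f i x) - (y - x) • D|
      = |(⨆ i, f i y) - ⨆ i, (c + (y - x) * d i)| := by
        simp only [hfx, ciSup_const, hD y hy, smul_eq_mul, sub_sub]
    _ ≤ ∑ i, |f i y - (c + (y - x) * d i)| := abs_ciSup_sub_ciSup_le _ _
    _ = ∑ i, |f i y - f i x - (y - x) • d i| := by simp only [hfx, smul_eq_mul, sub_sub]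

section OneSided

variable {ι : Type*} [Finite ι] [Nonempty ι] {f : ι → ℝ → ℝ} {d : ι → ℝ} {x c : ℝ}

lemma hasDerivWithinAt_ciSup_Ici (hfx : ∀ i, f i x = c)
    (hd : ∀ i, HasDerivWithinAt (f i) (d i) (Ici x) x) :
    HasDerivWithinAt (fun y => ⨆ i, f i y) (⨆ i, d i) (Ici x) x := by
  have := Fintype.ofFinite ι
  refine hasDerivWithinAt_ciSup_of_tangents hfx hd fun y hy => ?_
  rw [Real.mul_iSup_of_nonneg (sub_nonneg.2 hy), add_ciSup (Finite.bddAbove_range _)]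

lemma hasDerivWithinAt_ciSup_Iic (hfx : ∀ i, f i x = c)
    (hd : ∀ i, HasDerivWithinAt (f i) (d i) (Iic x) x) :
    HasDerivWithinAt (fun y => ⨆ i, f i y) (⨅ i, d i) (Iic x) x := by
  have := Fintype.ofFinite ι
  refine hasDerivWithinAt_ciSup_of_tangents hfx hd fun y hy => ?_
  rw [Real.mul_iInf_of_nonpos (sub_nonpos.2 hy), add_ciSup (Finite.bddAbove_range _)]

end OneSided

section Argmax

variable {ι : Type*} [Finite ι] [Nonempty ι] {f : ι → ℝ → ℝ} {x : ℝ}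

lemma nonempty_subtype_eq_ciSup (f : ι → ℝ → ℝ) (x : ℝ) : Nonempty {i // f i x = ⨆ j, f j x} :=
  nonempty_subtype.2 exists_eq_ciSup_of_finite

lemma ciSup_eventuallyEq_ciSup_argmax (hf : ∀ i, ContinuousAt (f i) x) :
    (fun y => ⨆ i, f i y) =ᶠ[𝓝 x] fun y => ⨆ i : {i // f i x = ⨆ j, f j x}, f i y := by
  have := nonempty_subtype_eq_ciSup f x
  obtain ⟨i₀, hi₀⟩ := exists_eq_ciSup_of_finite (f := fun i => f i x)
  have hnonmax : ∀ᶠ y in 𝓝 x, ∀ i, f i x ≠ ⨆ j, f j x → f i y < f i₀ y := by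
    refine eventually_all.2 fun i => ?_
    by_cases hi : f i x = ⨆ j, f j x
    · exact .of_forall fun _ h => absurd hi h
    · have hlt : f i x < f i₀ x :=
        hi₀ ▸ lt_of_le_of_ne (le_ciSup (Finite.bddAbove_range (fun j => f j x)) i) hi
      filter_upwards [(hf i).eventually_lt (hf i₀) hlt] with y hy using fun _ => hy
  filter_upwards [hnonmax] with y hy
  have hle : ∀ i : {i // f i x = ⨆ j, f j x}, f i y ≤ ⨆ i : {i // f i x = ⨆ j, f j x}, f i y :=
    le_ciSup (Finite.bddAbove_range _)
  refine le_antisymm (ciSup_le fun i => ?_) (ciSup_le fun i => ?_)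
  · by_cases hi : f i x = ⨆ j, f j x
    · exact hle ⟨i, hi⟩
    · exact (hy i hi).le.trans (hle ⟨i₀, hi₀⟩)
  · exact le_ciSup (Finite.bddAbove_range (fun j => f j y)) i.1

variable {d : ι → ℝ}

theorem hasDerivWithinAt_ciSup_Ici_of_hasDerivAt (hd : ∀ i, HasDerivAt (f i) (d i) x) :
    HasDerivWithinAt (fun y => ⨆ i, f i y) (⨆ i : {i // f i x = ⨆ j, f j x}, d i) (Ici x) x := by
  have := nonempty_subtype_eq_ciSup f x
  have hloc := ciSup_eventuallyEq_ciSup_argmax fun i => (hd i).continuousAt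
  exact (hasDerivWithinAt_ciSup_Ici (f := fun i : {i // f i x = ⨆ j, f j x} => f i)
    (d := fun i => d i) (fun i => i.2) fun i => (hd i).hasDerivWithinAt).congr_of_eventuallyEq
    (nhdsWithin_le_nhds hloc) hloc.eq_of_nhds

theorem hasDerivWithinAt_ciSup_Iic_of_hasDerivAt (hd : ∀ i, HasDerivAt (f i) (d i) x) :
    HasDerivWithinAt (fun y => ⨆ i, f i y) (⨅ i : {i // f i x = ⨆ j, f j x}, d i) (Iic x) x := by
  have := nonempty_subtype_eq_ciSup f x
  have hloc := ciSup_eventuallyEq_ciSup_argmax fun i => (hd i).continuousAt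
  exact (hasDerivWithinAt_ciSup_Iic (f := fun i : {i // f i x = ⨆ j, f j x} => f i)
    (d := fun i => d i) (fun i => i.2) fun i => (hd i).hasDerivWithinAt).congr_of_eventuallyEq
    (nhdsWithin_le_nhds hloc) hloc.eq_of_nhds

end Argmax

theorem stmt0_general
    {J : Type*} [Fintype J] [Nonempty J]
    (a b : ℝ)
    (f : J → ℝ → ℝ)
    (hf : ∀ j, ContDiffOn ℝ 1 (f j) (Set.Icc a b))
    (g : ℝ → ℝ) (hg : ∀ x, g x = ⨆ j, f j x) :
    ∀ x ∈ Set.Ioo a b,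
      ∃ dr dl : ℝ,
        HasDerivWithinAt g dr (Set.Ici x) x ∧
        HasDerivWithinAt g dl (Set.Iic x) x ∧
        dl ≤ dr ∧
        (∀ j, f j x = g x → derivWithin (f j) (Set.Icc a b) x ≤ dr) ∧
        (∀ j, f j x = g x → dl ≤ derivWithin (f j) (Set.Icc a b) x) := by
  intro x hx
  obtain rfl : g = fun y => ⨆ j, f j y := funext hg
  have hd : ∀ j, HasDerivAt (f j) (derivWithin (f j) (Icc a b) x) x := fun j =>
    ((hf j).differentiableOn one_ne_zero x (Ioo_subset_Icc_self hx)).hasDerivWithinAt.hasDerivAt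
      (Icc_mem_nhds hx.1 hx.2)
  have := nonempty_subtype_eq_ciSup f x
  have hbdd := Finite.bddAbove_range fun j : {j // f j x = ⨆ i, f i x} =>
    derivWithin (f j) (Icc a b) x
  have hbdd' := Finite.bddBelow_range fun j : {j // f j x = ⨆ i, f i x} =>
    derivWithin (f j) (Icc a b) x
  exact ⟨_, _, hasDerivWithinAt_ciSup_Ici_of_hasDerivAt hd,
    hasDerivWithinAt_ciSup_Iic_of_hasDerivAt hd,
    ciInf_le_ciSup hbdd' hbdd,
    fun j hj => le_ciSup hbdd ⟨j, hj⟩,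
    fun j hj => ciInf_le hbdd' ⟨j, hj⟩⟩

/-- the upper envelope `g` of a finite family of `C¹` functions on `[a,b]`
has one-sided derivatives at every interior point, with the right derivative at least the
left derivative; moreover the right derivative dominates `f_j'(x)` and the left derivative
is dominated by `f_j'(x)` for every `j` attaining the maximum at `x`. -/
theorem stmt0
    {J : Type*} [Fintype J] [Nonempty J]
    (a b : ℝ) (hab : a < b)
    (f : J → ℝ → ℝ)
    (hf : ∀ j, ContDiffOn ℝ 1 (f j) (Set.Icc a b))
    (g : ℝ → ℝ) (hg : ∀ x, g x = ⨆ j, f j x) :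
    ∀ x ∈ Set.Ioo a b,
      ∃ dr dl : ℝ,
        HasDerivWithinAt g dr (Set.Ici x) x ∧
        HasDerivWithinAt g dl (Set.Iic x) x ∧
        dl ≤ dr ∧
        (∀ j, f j x = g x → derivWithin (f j) (Set.Icc a b) x ≤ dr) ∧
        (∀ j, f j x = g x → dl ≤ derivWithin (f j) (Set.Icc a b) x) :=
  stmt0_general a b f hf g hg
end

section
/- Let T be a closed interval of ℝ, X a set, and f : X × T → ℝ. Suppose for every x ∈ X and t ∈ T the one-sided partial derivatives f₂⁺(x,t) and f₂⁻(x,t) (in the second argument) exist and satisfy f₂⁺(x,t) ≥ f₂⁻(x,t). Suppose V(t) := sup_{x∈X} f(x,t) is attained at some x*(t) for each t. Then for any t at which V is differentiable, the partial derivative f₂(x*(t),t) exists and equals V'(t). Consequently, if f₂⁺(x*(t),t) > f₂⁻(x*(t),t) then V is not differentiable at t. -/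
/-- envelope setting with upward kinks. For each `x`, `f x` has a right
derivative `dp x t` and a left derivative `dm x t` with `dm ≤ dp`. If
`V t = sup_x f x t` is attained at `xstar t`, then at any interior point where `V` is
differentiable, the partial derivative of `f (xstar t)` exists and equals `V' t`;
consequently, a strict upward kink of `f (xstar t)` at `t` precludes differentiability
of `V` at `t`. -/
theorem stmt3
    {X : Type*} (a b : ℝ)
    (f : X → ℝ → ℝ) (dp dm : X → ℝ → ℝ)
    (hdp : ∀ x, ∀ t ∈ Set.Icc a b, HasDerivWithinAt (f x) (dp x t) (Set.Ici t) t)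
    (hdm : ∀ x, ∀ t ∈ Set.Icc a b, HasDerivWithinAt (f x) (dm x t) (Set.Iic t) t)
    (hup : ∀ x, ∀ t ∈ Set.Icc a b, dm x t ≤ dp x t)
    (V : ℝ → ℝ) (xstar : ℝ → X)
    (hmax : ∀ t ∈ Set.Icc a b, ∀ x, f x t ≤ V t)
    (hatt : ∀ t ∈ Set.Icc a b, f (xstar t) t = V t) :
    ∀ t ∈ Set.Ioo a b,
      (DifferentiableAt ℝ V t → HasDerivAt (f (xstar t)) (deriv V t) t) ∧
      (dm (xstar t) t < dp (xstar t) t → ¬ DifferentiableAt ℝ V t) := by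
  intro t ht
  have htI : t ∈ Set.Icc a b := Set.Ioo_subset_Icc_self ht
  set x := xstar t with hx
  -- key: if V differentiable at t, then dp x t ≤ V' t ≤ dm x t
  have key : ∀ hV : DifferentiableAt ℝ V t,
      dp x t ≤ deriv V t ∧ deriv V t ≤ dm x t := by
    intro hV
    have hV' := hV.hasDerivAt
    have hg0 : V t - f x t = 0 := by rw [hatt t htI]; ring
    constructor
    · -- right side
      have hgr : HasDerivWithinAt (fun s => V s - f x s) (deriv V t - dp x t)
          (Set.Ici t) t := hV'.hasDerivWithinAt.sub (hdp x t htI)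
      rw [hasDerivWithinAt_iff_tendsto_slope, Set.Ici_sdiff_left] at hgr
      have hmem : Set.Ioo t b ∈ nhdsWithin t (Set.Ioi t) :=
        Ioo_mem_nhdsGT_of_mem ⟨le_refl t, ht.2⟩
      have hnn : 0 ≤ deriv V t - dp x t := by
        refine ge_of_tendsto hgr ?_
        filter_upwards [hmem] with s hs
        have hsI : s ∈ Set.Icc a b := ⟨le_of_lt (lt_trans ht.1 hs.1), le_of_lt hs.2⟩
        have hgs : 0 ≤ V s - f x s := sub_nonneg.2 (hmax s hsI x)
        have : slope (fun s => V s - f x s) t s = (V s - f x s - (V t - f x t)) / (s - t) :=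
          slope_def_field _ t s
        rw [this, hg0, sub_zero]
        exact div_nonneg hgs (by linarith [hs.1])
      linarith
    · -- left side
      have hgl : HasDerivWithinAt (fun s => V s - f x s) (deriv V t - dm x t)
          (Set.Iic t) t := hV'.hasDerivWithinAt.sub (hdm x t htI)
      rw [hasDerivWithinAt_iff_tendsto_slope, Set.Iic_diff_right] at hgl
      have hmem : Set.Ioo a t ∈ nhdsWithin t (Set.Iio t) :=
        Ioo_mem_nhdsLT_of_mem ⟨ht.1, le_refl t⟩
      have hnp : deriv V t - dm x t ≤ 0 := by
        refine le_of_tendsto hgl ?_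
        filter_upwards [hmem] with s hs
        have hsI : s ∈ Set.Icc a b := ⟨le_of_lt hs.1, le_of_lt (lt_trans hs.2 ht.2)⟩
        have hgs : 0 ≤ V s - f x s := sub_nonneg.2 (hmax s hsI x)
        have : slope (fun s => V s - f x s) t s = (V s - f x s - (V t - f x t)) / (s - t) :=
          slope_def_field _ t s
        rw [this, hg0, sub_zero]
        exact div_nonpos_of_nonneg_of_nonpos hgs (by linarith [hs.2])
      linarith
  constructor
  · intro hV
    obtain ⟨h1, h2⟩ := key hV
    have hupx := hup x t htI
    have hdpeq : dp x t = deriv V t := le_antisymm h1 (by linarith)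
    have hdmeq : dm x t = deriv V t := le_antisymm (by linarith) h2
    have hr := hdp x t htI
    have hl := hdm x t htI
    rw [hdpeq] at hr; rw [hdmeq] at hl
    have := hl.union hr
    rw [Set.Iic_union_Ici, hasDerivWithinAt_univ] at this
    exact this
  · intro hkink hV
    obtain ⟨h1, h2⟩ := key hV
    linarith
end

section
/- Let T be a closed interval [t̲, t̄] of ℝ, X a set, and f : X × T → ℝ with f(x,·) having one-sided derivatives satisfying f₂⁺ ≥ f₂⁻ everywhere. Suppose V(t) = sup_x f(x,t) = f(x*(t),t) is absolutely continuous on T. Then V(t) = V(t̲) + ∫_{t̲}^{t} f₂(x*(s),s) ds, where f₂(x*(s),s) exists for almost every s (namely wherever V is differentiable). -/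
open MeasureTheory

/-- envelope formula for an absolutely continuous value function.
Absolute continuity of `V` is encoded by the fundamental theorem of calculus form
(`V t = V a + ∫_a^t V'`), a.e. differentiability, and integrability of `V'`.
Under the upward-kink condition `f₂⁻ ≤ f₂⁺`, the partial derivative
`f₂(x*(s),s)` exists wherever `V` is differentiable (hence almost everywhere), and
`V t = V(t̲) + ∫_{t̲}^t f₂(x*(s),s) ds`. -/
theorem stmt4
    {X : Type*} (a b : ℝ) (hab : a ≤ b)
    (f : X → ℝ → ℝ) (dp dm : X → ℝ → ℝ)
    (hdp : ∀ x, ∀ t ∈ Set.Icc a b, HasDerivWithinAt (f x) (dp x t) (Set.Ici t) t)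
    (hdm : ∀ x, ∀ t ∈ Set.Icc a b, HasDerivWithinAt (f x) (dm x t) (Set.Iic t) t)
    (hup : ∀ x, ∀ t ∈ Set.Icc a b, dm x t ≤ dp x t)
    (V : ℝ → ℝ) (xstar : ℝ → X)
    (hmax : ∀ t ∈ Set.Icc a b, ∀ x, f x t ≤ V t)
    (hatt : ∀ t ∈ Set.Icc a b, f (xstar t) t = V t)
    (hdiff : ∀ᵐ s ∂volume, s ∈ Set.Ioo a b → DifferentiableAt ℝ V s)
    (hint : IntervalIntegrable (deriv V) volume a b)
    (hFTC : ∀ t ∈ Set.Icc a b, V t = V a + ∫ s in a..t, deriv V s) :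
    (∀ᵐ s ∂volume, s ∈ Set.Ioo a b → DifferentiableAt ℝ (f (xstar s)) s) ∧
    ∀ t ∈ Set.Icc a b,
      V t = V a + ∫ s in a..t, deriv (f (xstar s)) s := by
  have key : ∀ s ∈ Set.Ioo a b, DifferentiableAt ℝ V s →
      HasDerivAt (f (xstar s)) (deriv V s) s := by
    intro s hs hV
    have hsI : s ∈ Set.Icc a b := Set.Ioo_subset_Icc_self hs
    set x := xstar s with hx
    have hVd : HasDerivAt V (deriv V s) s := hV.hasDerivAt
    have hIci : Set.Ici s \ {s} = Set.Ioi s := by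
      ext y
      simp only [Set.mem_diff, Set.mem_Ici, Set.mem_singleton_iff, Set.mem_Ioi]
      constructor
      · rintro ⟨h1, h2⟩; exact lt_of_le_of_ne h1 (Ne.symm h2)
      · intro h; exact ⟨h.le, (ne_of_gt h)⟩
    have hIic : Set.Iic s \ {s} = Set.Iio s := by
      ext y
      simp only [Set.mem_diff, Set.mem_Iic, Set.mem_singleton_iff, Set.mem_Iio]
      constructor
      · rintro ⟨h1, h2⟩; exact lt_of_le_of_ne h1 h2
      · intro h; exact ⟨h.le, ne_of_lt h⟩
    have hfp : Filter.Tendsto (slope (f x) s) (nhdsWithin s (Set.Ioi s)) (nhds (dp x s)) := by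
      have := (hasDerivWithinAt_iff_tendsto_slope).1 (hdp x s hsI)
      rwa [hIci] at this
    have hfm : Filter.Tendsto (slope (f x) s) (nhdsWithin s (Set.Iio s)) (nhds (dm x s)) := by
      have := (hasDerivWithinAt_iff_tendsto_slope).1 (hdm x s hsI)
      rwa [hIic] at this
    have hVp : Filter.Tendsto (slope V s) (nhdsWithin s (Set.Ioi s)) (nhds (deriv V s)) := by
      have := (hasDerivWithinAt_iff_tendsto_slope).1
        (hVd.hasDerivWithinAt (s := Set.Ici s))
      rwa [hIci] at this
    have hVm : Filter.Tendsto (slope V s) (nhdsWithin s (Set.Iio s)) (nhds (deriv V s)) := by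
      have := (hasDerivWithinAt_iff_tendsto_slope).1
        (hVd.hasDerivWithinAt (s := Set.Iic s))
      rwa [hIic] at this
    have hev : ∀ᶠ y in nhds s, y ∈ Set.Ioo a b := isOpen_Ioo.mem_nhds hs
    have hfxs : f x s = V s := hatt s hsI
    have hgeq : dp x s ≤ deriv V s := by
      have h0 : (0:ℝ) ≤ deriv V s - dp x s := by
        refine ge_of_tendsto (hVp.sub hfp) ?_
        filter_upwards [hev.filter_mono nhdsWithin_le_nhds, self_mem_nhdsWithin] with y hy hy'
        have hyI : y ∈ Set.Icc a b := Set.Ioo_subset_Icc_self hy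
        have h1 : f x y ≤ V y := hmax y hyI x
        have hpos : (0:ℝ) < y - s := sub_pos.2 hy'
        have hval : slope V s y - slope (f x) s y = (V y - f x y) / (y - s) := by
          rw [slope_def_field, slope_def_field, hfxs, div_sub_div_same]
          ring_nf
        show (0:ℝ) ≤ slope V s y - slope (f x) s y
        rw [hval]
        exact div_nonneg (sub_nonneg.2 h1) hpos.le
      linarith
    have hleq : deriv V s ≤ dm x s := by
      have h0 : deriv V s - dm x s ≤ 0 := by
        refine le_of_tendsto (hVm.sub hfm) ?_
        filter_upwards [hev.filter_mono nhdsWithin_le_nhds, self_mem_nhdsWithin] with y hy hy'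
        have hyI : y ∈ Set.Icc a b := Set.Ioo_subset_Icc_self hy
        have h1 : f x y ≤ V y := hmax y hyI x
        have hneg : y - s < 0 := sub_neg.2 hy'
        have hval : slope V s y - slope (f x) s y = (V y - f x y) / (y - s) := by
          rw [slope_def_field, slope_def_field, hfxs, div_sub_div_same]
          ring_nf
        show slope V s y - slope (f x) s y ≤ (0:ℝ)
        rw [hval]
        exact div_nonpos_of_nonneg_of_nonpos (sub_nonneg.2 h1) hneg.le
      linarith
    have hdpv : dp x s = deriv V s :=
      le_antisymm hgeq (hleq.trans (hup x s hsI))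
    have hdmv : dm x s = deriv V s :=
      le_antisymm ((hup x s hsI).trans hgeq) hleq
    have h1 : HasDerivWithinAt (f x) (deriv V s) (Set.Iic s ∪ Set.Ici s) s :=
      HasDerivWithinAt.union (hdmv ▸ hdm x s hsI) (hdpv ▸ hdp x s hsI)
    rw [Set.Iic_union_Ici, hasDerivWithinAt_univ] at h1
    exact h1
  constructor
  · filter_upwards [hdiff] with s hsd hso
    exact (key s hso (hsd hso)).differentiableAt
  · intro t ht
    rw [hFTC t ht]
    congr 1
    refine intervalIntegral.integral_congr_ae ?_
    have hb : ∀ᵐ s : ℝ ∂volume, s ≠ b := by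
      refine MeasureTheory.ae_iff.2 ?_
      simp only [ne_eq, not_not]
      have : {s : ℝ | s = b} = {b} := by ext; simp
      rw [this]
      exact Real.volume_singleton
    filter_upwards [hdiff, hb] with s hsd hsb hst
    rw [Set.uIoc_of_le ht.1] at hst
    have hso : s ∈ Set.Ioo a b := ⟨hst.1, lt_of_le_of_ne (hst.2.trans ht.2) hsb⟩
    exact ((key s hso (hsd hso)).deriv).symm
end

section
/- Let V : O₁ × ⋯ × Oₙ × T → ℝ be weakly separable (strict version: V(oᵢ,o₋ᵢ,t) > V(oᵢ',o₋ᵢ,t) implies V(oᵢ,o₋ᵢ',t) > V(oᵢ',o₋ᵢ',t) for all o₋ᵢ'). Let M₁,…,Mₙ be nonempty finite menus and fix t. Suppose (φ₁,…,φₙ) ∈ M₁ × ⋯ × Mₙ satisfies, for each i: max_{o₋ᵢ ∈ M₋ᵢ} V(φᵢ, o₋ᵢ, t) ≥ max_{o₋ᵢ ∈ M₋ᵢ} V(oᵢ, o₋ᵢ, t) for every oᵢ ∈ Mᵢ. Then (φ₁,…,φₙ) maximizes V(·,t) over M₁ × ⋯ × Mₙ. -/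
/-- under weak separability, if each `φᵢ` is optimal for the agent's
indirect utility (i.e. the maximal value of `V` over profiles with `i`-th coordinate
`φᵢ` dominates the maximal value over profiles with `i`-th coordinate any other menu
item), then the profile `φ` maximizes `V(·,t)` over the product of the menus. The
indirect-utility domination is expressed by exhibiting, for each profile `o` with
`i`-th coordinate in the menu, a profile `o'` with `i`-th coordinate `φᵢ` weakly
better for the agent. -/
theorem stmt9 {ι : Type*} [Fintype ι] [DecidableEq ι] {O : ι → Type*} {T : Type*}
    (V : (∀ i, O i) → T → ℝ)
    (hws : ∀ (i : ι) (t : T) (oi oi' : O i) (o o' : ∀ j, O j),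
      V (Function.update o i oi) t > V (Function.update o i oi') t →
      V (Function.update o' i oi) t > V (Function.update o' i oi') t)
    (M : ∀ i, Finset (O i)) (hM : ∀ i, (M i).Nonempty)
    (t : T) (φ : ∀ i, O i) (hφ : ∀ i, φ i ∈ M i)
    (hopt : ∀ (i : ι), ∀ oi ∈ M i, ∀ o : ∀ j, O j,
      (∀ j, o j ∈ M j) → o i = oi →
      ∃ o' : ∀ j, O j, (∀ j, o' j ∈ M j) ∧ o' i = φ i ∧ V o t ≤ V o' t) :
    ∀ o : ∀ j, O j, (∀ j, o j ∈ M j) → V o t ≤ V φ t := by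
  classical
  -- key claim by induction on a finite set of coordinates
  have main : ∀ s : Finset ι, ∃ m : ∀ i, O i, (∀ j, m j ∈ M j) ∧ (∀ j ∈ s, m j = φ j) ∧
      ∀ o : ∀ j, O j, (∀ j, o j ∈ M j) → V o t ≤ V m t := by
    intro s
    induction s using Finset.induction with
    | empty =>
      -- a maximizer over the finite nonempty product
      have hne : (Fintype.piFinset M).Nonempty := Fintype.piFinset_nonempty.2 hM
      obtain ⟨m, hmmem, hmax⟩ := Finset.exists_max_image (Fintype.piFinset M) (fun o => V o t) hne
      refine ⟨m, fun j => (Fintype.mem_piFinset).1 hmmem j, by simp, ?_⟩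
      intro o ho
      exact hmax o (Fintype.mem_piFinset.2 ho)
    | @insert i s hi ih =>
      obtain ⟨m, hmem, hs, hmax⟩ := ih
      set m' := Function.update m i (φ i) with hm'
      have hmem' : ∀ j, m' j ∈ M j := by
        intro j
        by_cases h : j = i
        · subst h; simp [hm', hφ j]
        · simp [hm', Function.update_of_ne h, hmem j]
      -- m' is still a maximizer
      have hVm' : V m t ≤ V m' t := by
        obtain ⟨o', ho'mem, ho'i, hle⟩ := hopt i (m i) (hmem i) m hmem rfl
        have ho'eq : V o' t = V m t := le_antisymm (hmax o' ho'mem) hle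
        by_contra hlt
        push_neg at hlt
        have h1 : V (Function.update m i (m i)) t > V (Function.update m i (φ i)) t := by
          rwa [Function.update_eq_self]
        have h2 := hws i t (m i) (φ i) m o' h1
        have ho'u : Function.update o' i (φ i) = o' := by
          rw [← ho'i, Function.update_eq_self]
        rw [ho'u, ho'eq] at h2
        have hmemu : ∀ j, Function.update o' i (m i) j ∈ M j := by
          intro j
          by_cases h : j = i
          · subst h; simp [hmem]
          · simp [Function.update_of_ne h, ho'mem j]
        exact absurd (hmax _ hmemu) (not_le.2 h2)
      refine ⟨m', hmem', ?_, fun o ho => (hmax o ho).trans hVm'⟩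
      intro j hj
      rcases Finset.mem_insert.1 hj with h | h
      · subst h; simp [hm']
      · have hne : j ≠ i := fun hji => hi (hji ▸ h)
        simp [hm', Function.update_of_ne hne, hs j h]
  obtain ⟨m, hmem, hall, hmax⟩ := main Finset.univ
  have : m = φ := funext fun j => hall j (Finset.mem_univ j)
  intro o ho
  exact this ▸ hmax o ho
end

section
/- Let f : X × [a,b] → ℝ be such that for each x, f(x,·) is absolutely continuous on [a,b] and there is an integrable function h with |∂_t f(x,t)| ≤ h(t) for almost every t, uniformly in x. If V(t) := sup_{x∈X} f(x,t) is finite everywhere, then V is absolutely continuous on [a,b]. -/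
open MeasureTheory

/-- Absolute continuity of a real function on `[a,b]`: for every `ε > 0` there is a
`δ > 0` such that for any finite family of pairwise disjoint subintervals of `[a,b]`
of total length less than `δ`, the total variation of `V` over them is less than
`ε`. -/
def AbsolutelyContinuousOn (V : ℝ → ℝ) (a b : ℝ) : Prop :=
  ∀ ε > (0 : ℝ), ∃ δ > (0 : ℝ), ∀ n : ℕ, ∀ c d : Fin n → ℝ,
    (∀ i, c i ∈ Set.Icc a b ∧ d i ∈ Set.Icc a b ∧ c i ≤ d i) →
    (Pairwise fun i j => Disjoint (Set.Ioo (c i) (d i)) (Set.Ioo (c j) (d j))) →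
    (∑ i, (d i - c i)) < δ →
    (∑ i, |V (d i) - V (c i)|) < ε

/-- Milgrom–Segal: if each `f(x,·)` is absolutely continuous on
`[a,b]` (given in FTC form with density `f'(x,·)`) with `|∂_t f(x,t)| ≤ h(t)` a.e.,
uniformly in `x`, for an integrable `h`, and `V(t) = sup_x f(x,t)` is finite (bounded
above) at every `t`, then `V` is absolutely continuous on `[a,b]`. -/
theorem stmt19 {X : Type*} [Nonempty X] (a b : ℝ) (hab : a ≤ b)
    (f : X → ℝ → ℝ) (f' : X → ℝ → ℝ) (h : ℝ → ℝ)
    (hh : IntegrableOn h (Set.Icc a b) volume)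
    (hf'int : ∀ x, IntervalIntegrable (f' x) volume a b)
    (hbound : ∀ x, ∀ᵐ s ∂volume, s ∈ Set.Icc a b → |f' x s| ≤ h s)
    (hFTC : ∀ x, ∀ t ∈ Set.Icc a b, f x t = f x a + ∫ s in a..t, f' x s)
    (V : ℝ → ℝ) (hV : ∀ t, V t = ⨆ x, f x t)
    (hfin : ∀ t ∈ Set.Icc a b, BddAbove (Set.range fun x => f x t)) :
    AbsolutelyContinuousOn V a b := by
  classical
  intro ε hε
  set H : ℝ → ℝ := (Set.Icc a b).indicator (fun s => |h s|) with hHdef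
  have HInt : Integrable H volume :=
    IntegrableOn.integrable_indicator hh.abs measurableSet_Icc
  have Hnn : ∀ s, 0 ≤ H s := fun s =>
    Set.indicator_nonneg (fun t _ => abs_nonneg _) s
  -- key estimate
  have key : ∀ c d : ℝ, c ∈ Set.Icc a b → d ∈ Set.Icc a b → c ≤ d →
      |V d - V c| ≤ ∫ s in Set.Ioo c d, H s := by
    intro c d hc hd hcd
    have hIoc : Set.Ioc c d ⊆ Set.Icc a b := fun s hs =>
      ⟨hc.1.trans hs.1.le, hs.2.trans hd.2⟩
    have HIntIoc : IntegrableOn H (Set.Ioc c d) volume := HInt.integrableOn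
    have hfd : ∀ x, |f x d - f x c| ≤ ∫ s in Set.Ioc c d, H s := by
      intro x
      have hint : IntervalIntegrable (f' x) volume c d :=
        (hf'int x).mono_set (by
          rw [Set.uIcc_of_le hcd, Set.uIcc_of_le hab]
          exact Set.Icc_subset_Icc hc.1 hd.2)
      have h1 : f x d - f x c = ∫ s in c..d, f' x s := by
        rw [hFTC x d hd, hFTC x c hc]
        have : (∫ s in a..d, f' x s) = (∫ s in a..c, f' x s) + ∫ s in c..d, f' x s := by
          rw [intervalIntegral.integral_add_adjacent_intervals]
          · exact (hf'int x).mono_set (by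
              rw [Set.uIcc_of_le hc.1, Set.uIcc_of_le hab]
              exact Set.Icc_subset_Icc le_rfl hc.2)
          · exact hint
        rw [this]; ring
      rw [h1]
      have h2 : |∫ s in c..d, f' x s| ≤ ∫ s in Set.Ioc c d, |f' x s| := by
        have := intervalIntegral.abs_integral_le_integral_abs (f := f' x) (μ := volume) hcd
        simp only [intervalIntegral.integral_of_le hcd] at this ⊢
        exact this
      refine h2.trans (setIntegral_mono_on_ae hint.1.abs HIntIoc measurableSet_Ioc ?_)
      filter_upwards [hbound x] with s hs hsIoc
      calc |f' x s| ≤ h s := hs (hIoc hsIoc)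
        _ ≤ |h s| := le_abs_self _
        _ = H s := by rw [hHdef, Set.indicator_of_mem (hIoc hsIoc)]
    have hB : 0 ≤ ∫ s in Set.Ioc c d, H s :=
      setIntegral_nonneg measurableSet_Ioc fun s _ => Hnn s
    have hVle : ∀ u v : ℝ, u ∈ Set.Icc a b → v ∈ Set.Icc a b →
        (∀ x, f x u - f x v ≤ ∫ s in Set.Ioc c d, H s) →
        V u - V v ≤ ∫ s in Set.Ioc c d, H s := by
      intro u v hu hv hx
      rw [hV u, hV v, sub_le_iff_le_add]
      refine ciSup_le fun x => ?_
      have : f x u ≤ f x v + ∫ s in Set.Ioc c d, H s := by linarith [hx x]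
      refine this.trans ?_
      have : f x v ≤ ⨆ y, f y v := le_ciSup (hfin v hv) x
      linarith
    have hIoo : (∫ s in Set.Ioc c d, H s) = ∫ s in Set.Ioo c d, H s :=
      integral_Ioc_eq_integral_Ioo
    rw [← hIoo]
    rw [abs_sub_le_iff]
    constructor
    · exact hVle d c hd hc fun x => (le_abs_self _).trans (hfd x)
    · exact hVle c d hc hd fun x => by
        have h1 := hfd x
        have h2 := neg_abs_le (f x d - f x c)
        linarith
  -- absolute continuity of the integral of H
  have Hfin : (∫⁻ s, ENNReal.ofReal (H s) ∂volume) ≠ ⊤ := by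
    rw [← ofReal_integral_eq_lintegral_ofReal HInt (Filter.Eventually.of_forall Hnn)]
    exact ENNReal.ofReal_ne_top
  obtain ⟨δ, hδ0, hδ⟩ := exists_pos_setLIntegral_lt_of_measure_lt Hfin
    (ENNReal.ofReal_pos.2 hε).ne'
  obtain ⟨δ', hδ'0, hδ'lt⟩ : ∃ δ' > (0:ℝ), ENNReal.ofReal δ' ≤ δ := by
    rcases lt_or_ge δ ⊤ with h1 | h1
    · exact ⟨δ.toReal, ENNReal.toReal_pos hδ0.ne' h1.ne, ENNReal.ofReal_toReal_le⟩
    · exact ⟨1, one_pos, le_top.trans_eq (top_le_iff.1 h1).symm⟩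
  refine ⟨δ', hδ'0, fun n c d hcd hdisj hsum => ?_⟩
  set U : Set ℝ := ⋃ i, Set.Ioo (c i) (d i) with hU
  have hmeas : ∀ i : Fin n, MeasurableSet (Set.Ioo (c i) (d i)) := fun i => measurableSet_Ioo
  have hUmeas : volume U < δ := by
    calc volume U ≤ ∑ i, volume (Set.Ioo (c i) (d i)) :=
          (measure_iUnion_le _).trans_eq (by rw [tsum_fintype])
      _ = ∑ i, ENNReal.ofReal (d i - c i) := by
          simp_rw [Real.volume_Ioo]
      _ = ENNReal.ofReal (∑ i, (d i - c i)) := by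
          rw [ENNReal.ofReal_sum_of_nonneg fun i _ => sub_nonneg.2 (hcd i).2.2]
      _ < ENNReal.ofReal δ' := ENNReal.ofReal_lt_ofReal_iff_of_nonneg
          (Finset.sum_nonneg fun i _ => sub_nonneg.2 (hcd i).2.2) |>.2 hsum
      _ ≤ δ := hδ'lt
  have hUint : IntegrableOn H U volume := HInt.integrableOn
  have hsplit : (∑ i, ∫ s in Set.Ioo (c i) (d i), H s) = ∫ s in U, H s := by
    rw [hU, integral_iUnion hmeas hdisj hUint, tsum_fintype]
  have hlast : (∫ s in U, H s) < ε := by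
    have := hδ U hUmeas
    rw [← ofReal_integral_eq_lintegral_ofReal hUint
      (Filter.Eventually.of_forall fun s => Hnn s)] at this
    exact (ENNReal.ofReal_lt_ofReal_iff hε).1 this
  calc (∑ i, |V (d i) - V (c i)|) ≤ ∑ i, ∫ s in Set.Ioo (c i) (d i), H s :=
        Finset.sum_le_sum fun i _ => key (c i) (d i) (hcd i).1 (hcd i).2.1 (hcd i).2.2
    _ = ∫ s in U, H s := hsplit
    _ < ε := hlast
end
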